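/- arXiv:2108.05534 — 10 statements merged into one kernel-verified Lean document; each statement's English description precedes it below -/
import Mathlib

section
/- The system x_{n+1} = α + y_n^p / y_{n-2}^p, y_{n+1} = α + x_n^q / x_{n-2}^q has no nontrivial two-periodic positive solutions: if a positive solution satisfies x_{n-2} = x_n and y_{n-2} = y_n for all n ≥ 0, then x_n = y_n = α + 1 for all n ≥ 1. -/
theorem no_nontrivial_two_periodic (α p q : ℝ) (hα : 0 < α) (hp : 0 < p) (hq : 0 < q)
    (x y : ℤ → ℝ)
    (hx0 : ∀ n : ℤ, -2 ≤ n → 0 < x n) (hy0 : ∀ n : ℤ, -2 ≤ n → 0 < y n)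
    (hx : ∀ n : ℤ, 0 ≤ n → x (n + 1) = α + y n ^ p / y (n - 2) ^ p)
    (hy : ∀ n : ℤ, 0 ≤ n → y (n + 1) = α + x n ^ q / x (n - 2) ^ q)
    (hper : ∀ n : ℤ, 0 ≤ n → x (n - 2) = x n ∧ y (n - 2) = y n) :
    ∀ n : ℤ, 1 ≤ n → x n = α + 1 ∧ y n = α + 1 := by
  intro n hn
  have h1 : (0:ℤ) ≤ n - 1 := by omega
  have hx' := hx (n - 1) h1
  have hy' := hy (n - 1) h1
  have hper' := hper (n - 1) h1
  rw [sub_add_cancel] at hx' hy'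
  have hyp : 0 < y (n - 1) := hy0 _ (by omega)
  have hxp : 0 < x (n - 1) := hx0 _ (by omega)
  constructor
  · rw [hx', hper'.2, div_self (ne_of_gt (Real.rpow_pos_of_pos hyp p))]
  · rw [hy', hper'.1, div_self (ne_of_gt (Real.rpow_pos_of_pos hxp q))]
end

section
/- There is no positive solution (x_n, y_n) of the system and index N ≥ -2 such that x_n < α+1 and y_n < α+1 for all n ≥ N; i.e., the system has no infinite negative semi-cycle. -/
open Filter Topology

theorem no_infinite_negative_semicycle (α p q : ℝ) (hα : 0 < α) (hp : 0 < p) (hq : 0 < q)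
    (x y : ℤ → ℝ)
    (hx0 : ∀ n : ℤ, -2 ≤ n → 0 < x n) (hy0 : ∀ n : ℤ, -2 ≤ n → 0 < y n)
    (hx : ∀ n : ℤ, 0 ≤ n → x (n + 1) = α + y n ^ p / y (n - 2) ^ p)
    (hy : ∀ n : ℤ, 0 ≤ n → y (n + 1) = α + x n ^ q / x (n - 2) ^ q) :
    ¬ ∃ N : ℤ, -2 ≤ N ∧ ∀ n : ℤ, N ≤ n → x n < α + 1 ∧ y n < α + 1 := by
  rintro ⟨N, hN2, h⟩
  set K : ℤ := max N 0 with hK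
  have hKN : N ≤ K := le_max_left _ _
  have hK0 : (0:ℤ) ≤ K := le_max_right _ _
  have hydec : ∀ n : ℤ, K ≤ n → y n < y (n - 2) := by
    intro n hn
    have hn0 : (0:ℤ) ≤ n := le_trans hK0 hn
    have hyn : 0 < y n := hy0 n (by linarith)
    have hyn2 : 0 < y (n - 2) := hy0 (n-2) (by linarith)
    have hxn1 : x (n+1) < α + 1 := (h (n+1) (by linarith)).1
    rw [hx n hn0] at hxn1
    by_contra hle
    push_neg at hle
    have h1 : y (n-2) ^ p ≤ y n ^ p := Real.rpow_le_rpow hyn2.le hle hp.le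
    have hpow : 0 < y (n-2) ^ p := Real.rpow_pos_of_pos hyn2 p
    have : (1:ℝ) ≤ y n ^ p / y (n-2) ^ p := (one_le_div hpow).2 h1
    linarith
  have hxdec : ∀ n : ℤ, K ≤ n → x n < x (n - 2) := by
    intro n hn
    have hn0 : (0:ℤ) ≤ n := le_trans hK0 hn
    have hxn : 0 < x n := hx0 n (by linarith)
    have hxn2 : 0 < x (n - 2) := hx0 (n-2) (by linarith)
    have hyn1 : y (n+1) < α + 1 := (h (n+1) (by linarith)).2
    rw [hy n hn0] at hyn1
    by_contra hle
    push_neg at hle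
    have h1 : x (n-2) ^ q ≤ x n ^ q := Real.rpow_le_rpow hxn2.le hle hq.le
    have hpow : 0 < x (n-2) ^ q := Real.rpow_pos_of_pos hxn2 q
    have : (1:ℝ) ≤ x n ^ q / x (n-2) ^ q := (one_le_div hpow).2 h1
    linarith
  have hyα : ∀ n : ℤ, K + 1 ≤ n → α < y n := by
    intro n hn
    have heq : y (n - 1 + 1) = α + x (n-1) ^ q / x (n-1-2) ^ q := hy (n-1) (by linarith)
    have hpos : 0 < x (n-1) ^ q / x (n-1-2) ^ q :=
      div_pos (Real.rpow_pos_of_pos (hx0 _ (by linarith)) q)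
        (Real.rpow_pos_of_pos (hx0 _ (by linarith)) q)
    have hne : n - 1 + 1 = n := by ring
    rw [hne] at heq
    linarith
  set b : ℕ → ℝ := fun k => y (K + 1 + 2 * k) with hb
  have hbα : ∀ k : ℕ, α < b k := by
    intro k
    exact hyα _ (by omega)
  have hbstep : ∀ k : ℕ, b (k+1) < b k := by
    intro k
    have hn : K ≤ K + 1 + 2 * ((k:ℤ)+1) := by omega
    have := hydec _ hn
    have e : (K + 1 + 2 * ((k:ℤ)+1)) - 2 = K + 1 + 2*k := by ring
    rw [e] at this
    have e2 : ((k:ℤ)+1) = ((k+1 : ℕ) : ℤ) := by push_cast; ring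
    rw [e2] at this
    exact this
  have hanti : Antitone b := antitone_nat_of_succ_le fun k => (hbstep k).le
  have hbdd : BddBelow (Set.range b) := ⟨α, by rintro _ ⟨k, rfl⟩; exact (hbα k).le⟩
  set L : ℝ := ⨅ k, b k with hL
  have hbL : Tendsto b atTop (𝓝 L) := tendsto_atTop_ciInf hanti hbdd
  have hLα : α ≤ L := le_ciInf fun k => (hbα k).le
  have hL0 : 0 < L := lt_of_lt_of_le hα hLα
  have hb1 : Tendsto (fun k => b (k+1)) atTop (𝓝 L) := hbL.comp (tendsto_add_atTop_nat 1)
  have hr : Tendsto (fun k => b (k+1) / b k) atTop (𝓝 1) := by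
    have := hb1.div hbL hL0.ne'
    rwa [div_self hL0.ne'] at this
  have hcont : ContinuousAt (fun t : ℝ => t ^ p) 1 :=
    Real.continuousAt_rpow_const 1 p (Or.inl one_ne_zero)
  have hrp : Tendsto (fun k => (b (k+1) / b k) ^ p) atTop (𝓝 1) := by
    have := hcont.tendsto.comp hr
    rwa [Real.one_rpow] at this
  have ha : Tendsto (fun k : ℕ => x (K + 4 + 2 * k)) atTop (𝓝 (α + 1)) := by
    have heq : ∀ k : ℕ, x (K + 4 + 2 * k) = α + (b (k+1) / b k) ^ p := by
      intro k
      have hrec := hx (K + 3 + 2 * k) (by omega)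
      have e1 : K + 3 + 2 * (k:ℤ) + 1 = K + 4 + 2*k := by ring
      have e2 : K + 3 + 2 * (k:ℤ) - 2 = K + 1 + 2*k := by ring
      rw [e1, e2] at hrec
      have hb1k : b (k+1) = y (K + 3 + 2*k) := by
        simp only [hb]; push_cast; ring_nf
      have hbk : b k = y (K + 1 + 2*k) := rfl
      have hy1 : 0 < y (K + 3 + 2*(k:ℤ)) := hy0 _ (by omega)
      have hy2 : 0 < y (K + 1 + 2*(k:ℤ)) := hy0 _ (by omega)
      rw [hrec, hb1k, hbk, Real.div_rpow hy1.le hy2.le]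
    have : Tendsto (fun k : ℕ => α + (b (k+1) / b k) ^ p) atTop (𝓝 (α + 1)) :=
      tendsto_const_nhds.add hrp
    exact this.congr fun k => (heq k).symm
  have hmono : ∀ k : ℕ, x (K + 4 + 2 * k) ≤ x (K + 4) := by
    intro k
    induction k with
    | zero => simp
    | succ m ih =>
      have hn : K ≤ K + 4 + 2 * ((m:ℤ)+1) := by omega
      have := hxdec _ hn
      have e : (K + 4 + 2 * ((m:ℤ)+1)) - 2 = K + 4 + 2*m := by ring
      rw [e] at this
      have e2 : K + 4 + 2 * ((m+1:ℕ):ℤ) = K + 4 + 2 * ((m:ℤ)+1) := by push_cast; ring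
      rw [e2]
      linarith
  have hle : α + 1 ≤ x (K + 4) := le_of_tendsto ha (Eventually.of_forall hmono)
  have hlt : x (K + 4) < α + 1 := (h (K+4) (by omega)).1
  linarith
end

section
/- If (x_n, y_n) is a positive solution of the system with x_n < α+1 and y_n < α+1 for all n ≥ N (for some N), then for all n ≥ N+2 one has x_n < x_{n-2} and y_n < y_{n-2}; hence both even- and odd-indexed subsequences of (x_n) and (y_n) are strictly decreasing and bounded below by α. -/
lemma aux_rpow_lt (a b r : ℝ) (ha : 0 < a) (hb : 0 < b) (hr : 0 < r)
    (h : a ^ r / b ^ r < 1) : a < b := by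
  by_contra h'
  push_neg at h'
  have hb' : b ^ r ≤ a ^ r := Real.rpow_le_rpow hb.le h' hr.le
  have hbpos : 0 < b ^ r := Real.rpow_pos_of_pos hb r
  have : (1 : ℝ) ≤ a ^ r / b ^ r := (one_le_div hbpos).mpr hb'
  linarith

theorem below_equilibrium_decreasing (α p q : ℝ) (hα : 0 < α) (hp : 0 < p) (hq : 0 < q)
    (x y : ℤ → ℝ)
    (hx0 : ∀ n : ℤ, -2 ≤ n → 0 < x n) (hy0 : ∀ n : ℤ, -2 ≤ n → 0 < y n)
    (hx : ∀ n : ℤ, 0 ≤ n → x (n + 1) = α + y n ^ p / y (n - 2) ^ p)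
    (hy : ∀ n : ℤ, 0 ≤ n → y (n + 1) = α + x n ^ q / x (n - 2) ^ q)
    (N : ℤ) (hN : -2 ≤ N)
    (hbelow : ∀ n : ℤ, N ≤ n → x n < α + 1 ∧ y n < α + 1) :
    ∀ n : ℤ, N + 2 ≤ n → x n < x (n - 2) ∧ y n < y (n - 2) := by
  intro n hn
  have hn0 : (0 : ℤ) ≤ n := by linarith
  have h1 := (hbelow (n + 1) (by linarith)).1
  have h2 := (hbelow (n + 1) (by linarith)).2
  rw [hx n hn0] at h1
  rw [hy n hn0] at h2
  constructor
  · exact aux_rpow_lt _ _ q (hx0 n (by linarith)) (hx0 (n - 2) (by linarith)) hq (by linarith)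
  · exact aux_rpow_lt _ _ p (hy0 n (by linarith)) (hy0 (n - 2) (by linarith)) hp (by linarith)
end

section
/- Assume α > 1 and 0 < p ≤ 1, 0 < q ≤ 1. Then every positive solution of the system satisfies, for all n ≥ 4, x_n < α + y_{n-1}/α^p and y_n < α + x_{n-1}/α^q. -/
theorem linear_upper_bound (α p q : ℝ) (hα : 1 < α) (hp : 0 < p) (hp1 : p ≤ 1)
    (hq : 0 < q) (hq1 : q ≤ 1)
    (x y : ℤ → ℝ)
    (hx0 : ∀ n : ℤ, -2 ≤ n → 0 < x n) (hy0 : ∀ n : ℤ, -2 ≤ n → 0 < y n)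
    (hx : ∀ n : ℤ, 0 ≤ n → x (n + 1) = α + y n ^ p / y (n - 2) ^ p)
    (hy : ∀ n : ℤ, 0 ≤ n → y (n + 1) = α + x n ^ q / x (n - 2) ^ q) :
    ∀ n : ℤ, 4 ≤ n → x n < α + y (n - 1) / α ^ p ∧ y n < α + x (n - 1) / α ^ q := by
  have hα0 : (0:ℝ) < α := by linarith
  have hxgt : ∀ m : ℤ, 1 ≤ m → α < x m := by
    intro m hm
    have h := hx (m - 1) (by linarith)
    rw [show m - 1 + 1 = m by ring] at h
    have h1 : 0 < y (m - 1) := hy0 _ (by linarith)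
    have h2 : 0 < y (m - 1 - 2) := hy0 _ (by linarith)
    have hpos : 0 < y (m - 1) ^ p / y (m - 1 - 2) ^ p :=
      div_pos (Real.rpow_pos_of_pos h1 p) (Real.rpow_pos_of_pos h2 p)
    linarith
  have hygt : ∀ m : ℤ, 1 ≤ m → α < y m := by
    intro m hm
    have h := hy (m - 1) (by linarith)
    rw [show m - 1 + 1 = m by ring] at h
    have h1 : 0 < x (m - 1) := hx0 _ (by linarith)
    have h2 : 0 < x (m - 1 - 2) := hx0 _ (by linarith)
    have hpos : 0 < x (m - 1) ^ q / x (m - 1 - 2) ^ q :=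
      div_pos (Real.rpow_pos_of_pos h1 q) (Real.rpow_pos_of_pos h2 q)
    linarith
  intro n hn
  constructor
  · have h := hx (n - 1) (by linarith)
    rw [show n - 1 + 1 = n by ring] at h
    have hy1 : α < y (n - 1 - 2) := hygt _ (by linarith)
    have hy2 : α < y (n - 1) := hygt _ (by linarith)
    have hnum : 0 < y (n - 1) ^ p := Real.rpow_pos_of_pos (by linarith) p
    have hαp : 0 < α ^ p := Real.rpow_pos_of_pos hα0 p
    have hden : α ^ p < y (n - 1 - 2) ^ p := Real.rpow_lt_rpow (le_of_lt hα0) hy1 hp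
    have s1 : y (n - 1) ^ p / y (n - 1 - 2) ^ p < y (n - 1) ^ p / α ^ p :=
      div_lt_div_of_pos_left hnum hαp hden
    have s2 : y (n - 1) ^ p ≤ y (n - 1) := by
      nth_rewrite 2 [← Real.rpow_one (y (n - 1))]
      exact Real.rpow_le_rpow_of_exponent_le (by linarith) hp1
    have s3 : y (n - 1) ^ p / α ^ p ≤ y (n - 1) / α ^ p :=
      (div_le_div_iff_of_pos_right hαp).mpr s2
    linarith
  · have h := hy (n - 1) (by linarith)
    rw [show n - 1 + 1 = n by ring] at h
    have hx1 : α < x (n - 1 - 2) := hxgt _ (by linarith)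
    have hx2 : α < x (n - 1) := hxgt _ (by linarith)
    have hnum : 0 < x (n - 1) ^ q := Real.rpow_pos_of_pos (by linarith) q
    have hαq : 0 < α ^ q := Real.rpow_pos_of_pos hα0 q
    have hden : α ^ q < x (n - 1 - 2) ^ q := Real.rpow_lt_rpow (le_of_lt hα0) hx1 hq
    have s1 : x (n - 1) ^ q / x (n - 1 - 2) ^ q < x (n - 1) ^ q / α ^ q :=
      div_lt_div_of_pos_left hnum hαq hden
    have s2 : x (n - 1) ^ q ≤ x (n - 1) := by
      nth_rewrite 2 [← Real.rpow_one (x (n - 1))]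
      exact Real.rpow_le_rpow_of_exponent_le (by linarith) hq1
    have s3 : x (n - 1) ^ q / α ^ q ≤ x (n - 1) / α ^ q :=
      (div_le_div_iff_of_pos_right hαq).mpr s2
    linarith
end

section
/- Let (s_n, t_n) solve the linear system s_n = α + t_{n-1}/α^p, t_n = α + s_{n-1}/α^q for n ≥ 4, with s_i = x_i, t_i = y_i for i = 1, 2, 3, where (x_n, y_n) is a positive solution of the nonlinear system with α > 1 and 0 < p, q ≤ 1. Then x_n < s_n and y_n < t_n for all n ≥ 4. -/
/-!
Every iterate of the nonlinear system exceeds `α > 1`. Hence in `x (n + 1) = α + y n ^ p / y (n - 2) ^ p`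
the denominator exceeds `α ^ p`, and `y n ^ p ≤ y n` because `y n ≥ 1` and `p ≤ 1`; so the nonlinear map
is strictly dominated by the linear comparison map. Since that map is monotone and the two systems agree
at `n = 3`, induction gives the strict comparison from `n = 4` on.
-/

lemma Real.rpow_div_rpow_lt_div_rpow {a u v p : ℝ} (ha : 0 < a) (hav : a < v) (hu : 1 ≤ u)
    (hp : 0 < p) (hp1 : p ≤ 1) : u ^ p / v ^ p < u / a ^ p :=
  calc u ^ p / v ^ p < u ^ p / a ^ p :=
        div_lt_div_of_pos_left (by positivity) (by positivity) (Real.rpow_lt_rpow ha.le hav hp)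
    _ ≤ u / a ^ p := by gcongr; exact Real.rpow_le_self_of_one_le hu hp1

section RationalStep

variable {α p : ℝ} {u v : ℤ → ℝ}

lemma lt_of_eq_add_rpow_div_rpow (hv0 : ∀ n : ℤ, -2 ≤ n → 0 < v n)
    (hu : ∀ n : ℤ, 0 ≤ n → u (n + 1) = α + v n ^ p / v (n - 2) ^ p) :
    ∀ n : ℤ, 1 ≤ n → α < u n := by
  intro n hn
  obtain ⟨k, hk, rfl⟩ : ∃ k : ℤ, 0 ≤ k ∧ n = k + 1 := ⟨n - 1, by omega, by ring⟩
  have hquot : 0 < v k ^ p / v (k - 2) ^ p := by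
    have := hv0 k (by omega)
    have := hv0 (k - 2) (by omega)
    positivity
  rw [hu k hk]
  linarith

lemma lt_add_div_rpow_of_eq_add_rpow_div_rpow (hα : 1 < α) (hp : 0 < p) (hp1 : p ≤ 1)
    (hvα : ∀ n : ℤ, 1 ≤ n → α < v n)
    (hu : ∀ n : ℤ, 0 ≤ n → u (n + 1) = α + v n ^ p / v (n - 2) ^ p) :
    ∀ n : ℤ, 4 ≤ n → u n < α + v (n - 1) / α ^ p := by
  intro n hn
  obtain ⟨k, hk, rfl⟩ : ∃ k : ℤ, 3 ≤ k ∧ n = k + 1 := ⟨n - 1, by omega, by ring⟩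
  rw [hu k (by omega), add_sub_cancel_right]
  have := Real.rpow_div_rpow_lt_div_rpow (by linarith) (hvα (k - 2) (by omega))
    (hα.trans (hvα k (by omega))).le hp hp1
  linarith

end RationalStep

lemma lt_of_lt_linear_recurrence {α c d : ℝ} {a b s t : ℤ → ℝ} (hc : 0 < c) (hd : 0 < d)
    (ha : ∀ n : ℤ, 4 ≤ n → a n < α + b (n - 1) / c)
    (hb : ∀ n : ℤ, 4 ≤ n → b n < α + a (n - 1) / d)
    (hs : ∀ n : ℤ, 4 ≤ n → s n = α + t (n - 1) / c)
    (ht : ∀ n : ℤ, 4 ≤ n → t n = α + s (n - 1) / d)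
    (h3 : a 3 ≤ s 3 ∧ b 3 ≤ t 3) :
    ∀ n : ℤ, 4 ≤ n → a n < s n ∧ b n < t n := by
  have step : ∀ n : ℤ, 4 ≤ n → a (n - 1) ≤ s (n - 1) ∧ b (n - 1) ≤ t (n - 1) →
      a n < s n ∧ b n < t n := by
    rintro n hn ⟨has, hbt⟩
    have : b (n - 1) / c ≤ t (n - 1) / c := by gcongr
    have : a (n - 1) / d ≤ s (n - 1) / d := by gcongr
    rw [hs n hn, ht n hn]
    exact ⟨(ha n hn).trans_le (by linarith), (hb n hn).trans_le (by linarith)⟩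
  have hle : ∀ n : ℤ, 3 ≤ n → a n ≤ s n ∧ b n ≤ t n := by
    refine Int.leInduction h3 fun n hn ih => ?_
    have := step (n + 1) (by omega) (by rwa [add_sub_cancel_right])
    exact ⟨this.1.le, this.2.le⟩
  exact fun n hn => step n hn (hle (n - 1) (by omega))

theorem comparison_system (α p q : ℝ) (hα : 1 < α) (hp : 0 < p) (hp1 : p ≤ 1)
    (hq : 0 < q) (hq1 : q ≤ 1)
    (x y s t : ℤ → ℝ)
    (hx0 : ∀ n : ℤ, -2 ≤ n → 0 < x n) (hy0 : ∀ n : ℤ, -2 ≤ n → 0 < y n)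
    (hx : ∀ n : ℤ, 0 ≤ n → x (n + 1) = α + y n ^ p / y (n - 2) ^ p)
    (hy : ∀ n : ℤ, 0 ≤ n → y (n + 1) = α + x n ^ q / x (n - 2) ^ q)
    (hs : ∀ n : ℤ, 4 ≤ n → s n = α + t (n - 1) / α ^ p)
    (ht : ∀ n : ℤ, 4 ≤ n → t n = α + s (n - 1) / α ^ q)
    (hinit : ∀ i : ℤ, i = 1 ∨ i = 2 ∨ i = 3 → s i = x i ∧ t i = y i) :
    ∀ n : ℤ, 4 ≤ n → x n < s n ∧ y n < t n := by
  have hα0 : 0 < α := one_pos.trans hα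
  have hxα := lt_of_eq_add_rpow_div_rpow hy0 hx
  have hyα := lt_of_eq_add_rpow_div_rpow hx0 hy
  obtain ⟨hs3, ht3⟩ := hinit 3 (by norm_num)
  exact lt_of_lt_linear_recurrence (Real.rpow_pos_of_pos hα0 p) (Real.rpow_pos_of_pos hα0 q)
    (lt_add_div_rpow_of_eq_add_rpow_div_rpow hα hp hp1 hyα hx)
    (lt_add_div_rpow_of_eq_add_rpow_div_rpow hα hq hq1 hxα hy) hs ht ⟨hs3.ge, ht3.ge⟩
end

section
/- Suppose α > 1 and l₁, l₂, L₁, L₂ are positive reals with l₁ ≤ L₁, l₂ ≤ L₂ satisfying l₁ ≥ α + l₂/L₂, l₂ ≥ α + l₁/L₁, L₁ ≤ α + L₂/l₂, and L₂ ≤ α + L₁/l₁. Then l₁ = L₁ = l₂ = L₂ = α + 1. -/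
theorem liminf_limsup_equal (α l₁ l₂ L₁ L₂ : ℝ) (hα : 1 < α)
    (hl₁ : 0 < l₁) (hl₂ : 0 < l₂) (hL₁ : 0 < L₁) (hL₂ : 0 < L₂)
    (h₁ : l₁ ≤ L₁) (h₂ : l₂ ≤ L₂)
    (e₁ : α + l₂ / L₂ ≤ l₁) (e₂ : α + l₁ / L₁ ≤ l₂)
    (e₃ : L₁ ≤ α + L₂ / l₂) (e₄ : L₂ ≤ α + L₁ / l₁) :
    l₁ = α + 1 ∧ L₁ = α + 1 ∧ l₂ = α + 1 ∧ L₂ = α + 1 := by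
  have f₁ : α * L₂ + l₂ ≤ l₁ * L₂ := by
    have h := mul_le_mul_of_nonneg_right e₁ hL₂.le
    rw [add_mul, div_mul_cancel₀ _ hL₂.ne'] at h
    linarith
  have f₂ : α * L₁ + l₁ ≤ l₂ * L₁ := by
    have h := mul_le_mul_of_nonneg_right e₂ hL₁.le
    rw [add_mul, div_mul_cancel₀ _ hL₁.ne'] at h
    linarith
  have f₃ : L₁ * l₂ ≤ α * l₂ + L₂ := by
    have h := mul_le_mul_of_nonneg_right e₃ hl₂.le
    rw [add_mul, div_mul_cancel₀ _ hl₂.ne'] at h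
    linarith
  have f₄ : L₂ * l₁ ≤ α * l₁ + L₁ := by
    have h := mul_le_mul_of_nonneg_right e₄ hl₁.le
    rw [add_mul, div_mul_cancel₀ _ hl₁.ne'] at h
    linarith
  have hu : α * (L₂ - l₁) ≤ L₁ - l₂ := by nlinarith [f₁, f₄]
  have hv : α * (L₁ - l₂) ≤ L₂ - l₁ := by nlinarith [f₂, f₃]
  have hu0 : L₁ - l₂ ≤ 0 := by nlinarith [mul_le_mul_of_nonneg_left hv (by linarith : (0:ℝ) ≤ α), hu, sq_nonneg (α - 1), sq_nonneg (α + 1), mul_self_nonneg (L₁ - l₂)]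
  have hv0 : L₂ - l₁ ≤ 0 := by nlinarith [mul_le_mul_of_nonneg_left hu (by linarith : (0:ℝ) ≤ α), hv, sq_nonneg (α - 1), sq_nonneg (α + 1), mul_self_nonneg (L₂ - l₁)]
  have eq1 : l₁ = L₁ := le_antisymm h₁ (by linarith)
  have eq2 : l₂ = L₂ := le_antisymm h₂ (by linarith)
  have eq3 : l₁ = l₂ := by linarith
  have d1 : l₂ / L₂ = 1 := by rw [eq2]; exact div_self hL₂.ne'
  have d2 : L₂ / l₂ = 1 := by rw [← eq2]; exact div_self hl₂.ne'
  rw [d1] at e₁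
  rw [d2] at e₃
  refine ⟨by linarith, by linarith, by linarith, by linarith⟩
end

section
/- Assume α > 1 and 0 < p, q ≤ 1. Then every positive solution (x_n, y_n) of the system converges to the equilibrium (α+1, α+1): lim_{n→∞} x_n = α+1 and lim_{n→∞} y_n = α+1. -/
open Filter Set Topology

/-!
Both sequences exceed `α` and are eventually bounded, so the ratios `x n / x (n - 2)` and
`y n / y (n - 2)` eventually lie in some band `[R⁻¹, R]`. For `0 < p ≤ 1` the map `t ↦ t ^ p`
keeps `[R⁻¹, R]` invariant, so the terms then lie in `[α + R⁻¹, α + R]` and the ratios improve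
to the band `[φ⁻¹, φ]` with `φ = (α + R) / (α + R⁻¹)`. Since `φ - 1 ≤ 2 / (α + 1) * (R - 1)` and
`2 / (α + 1) < 1`, iterating drives `R` to `1`, which squeezes both sequences to `α + 1`.
-/

lemma rpow_mem_uIcc_one_self {t e : ℝ} (ht : 0 < t) (he0 : 0 ≤ e) (he1 : e ≤ 1) :
    t ^ e ∈ uIcc 1 t := by
  rcases le_total t 1 with h | h
  · rw [uIcc_of_ge h]
    exact ⟨Real.self_le_rpow_of_le_one ht.le h he1, Real.rpow_le_one ht.le h he0⟩
  · rw [uIcc_of_le h]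
    exact ⟨Real.one_le_rpow h he0, Real.rpow_le_self_of_one_le h he1⟩

lemma rpow_mem_of_ordConnected {I : Set ℝ} [I.OrdConnected] (h1 : 1 ∈ I) {t e : ℝ}
    (ht : 0 < t) (htI : t ∈ I) (he0 : 0 ≤ e) (he1 : e ≤ 1) : t ^ e ∈ I :=
  OrdConnected.uIcc_subset ‹_› h1 htI (rpow_mem_uIcc_one_self ht he0 he1)

lemma div_mem_Icc_div {a b lo hi : ℝ} (hlo : 0 < lo) (ha : a ∈ Icc lo hi) (hb : b ∈ Icc lo hi) :
    a / b ∈ Icc (hi / lo)⁻¹ (hi / lo) := by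
  rw [inv_div]
  exact ⟨div_le_div₀ (hlo.le.trans ha.1) ha.1 (hlo.trans_le hb.1) hb.2,
    div_le_div₀ (hlo.le.trans (ha.1.trans ha.2)) ha.2 hlo hb.1⟩

lemma eventually_atTop_add_int {P : ℤ → Prop} (k : ℤ) :
    (∀ᶠ n in atTop, P (n + k)) ↔ ∀ᶠ n in atTop, P n := by
  rw [← eventually_map (m := fun n => n + k), map_add_atTop_eq]

lemma eventually_atTop_sub_int {P : ℤ → Prop} (k : ℤ) :
    (∀ᶠ n in atTop, P (n - k)) ↔ ∀ᶠ n in atTop, P n := by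
  rw [← eventually_map (m := fun n => n - k), map_sub_atTop_eq]

lemma iterate_mem_Icc_of_sub_one_le {f : ℝ → ℝ} {c R₀ : ℝ} (hc : 0 ≤ c)
    (hf1 : ∀ R, 1 ≤ R → 1 ≤ f R) (hfc : ∀ R, 1 ≤ R → f R - 1 ≤ c * (R - 1)) (hR₀ : 1 ≤ R₀)
    (k : ℕ) : f^[k] R₀ ∈ Icc 1 (1 + c ^ k * (R₀ - 1)) := by
  induction k with
  | zero => simpa using hR₀
  | succ k ih =>
    rw [Function.iterate_succ_apply']
    refine ⟨hf1 _ ih.1, ?_⟩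
    have := mul_le_mul_of_nonneg_left (sub_le_iff_le_add'.2 ih.2) hc
    rw [pow_succ', mul_assoc]
    linarith [hfc _ ih.1]

lemma tendsto_iterate_of_sub_one_le {f : ℝ → ℝ} {c R₀ : ℝ} (hc0 : 0 ≤ c) (hc1 : c < 1)
    (hf1 : ∀ R, 1 ≤ R → 1 ≤ f R) (hfc : ∀ R, 1 ≤ R → f R - 1 ≤ c * (R - 1)) (hR₀ : 1 ≤ R₀) :
    Tendsto (fun k => f^[k] R₀) atTop (𝓝 1) := by
  have hbound := iterate_mem_Icc_of_sub_one_le hc0 hf1 hfc hR₀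
  have hupper : Tendsto (fun k : ℕ => 1 + c ^ k * (R₀ - 1)) atTop (𝓝 1) := by
    simpa using ((tendsto_pow_atTop_nhds_zero_of_lt_one hc0 hc1).mul_const (R₀ - 1)).const_add 1
  exact tendsto_of_tendsto_of_tendsto_of_le_of_le tendsto_const_nhds hupper
    (fun k => (hbound k).1) (fun k => (hbound k).2)

/-- The first equation of the system says `IsRatioDriven α p y x`, the second
`IsRatioDriven α q x y`. -/
def IsRatioDriven (α e : ℝ) (v u : ℤ → ℝ) : Prop :=
  ∀ᶠ n in atTop, 0 < v n / v (n - 2) ∧ u (n + 1) = α + (v n / v (n - 2)) ^ e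

def RatioEventuallyIn (u : ℤ → ℝ) (I : Set ℝ) : Prop :=
  ∀ᶠ n in atTop, u n / u (n - 2) ∈ I

lemma ratioEventuallyIn_of_eventually_mem_Icc {u : ℤ → ℝ} {lo hi : ℝ} (hlo : 0 < lo)
    (hu : ∀ᶠ n in atTop, u n ∈ Icc lo hi) : RatioEventuallyIn u (Icc (hi / lo)⁻¹ (hi / lo)) := by
  filter_upwards [hu, (eventually_atTop_sub_int 2).2 hu] with n hn hn2
  exact div_mem_Icc_div hlo hn hn2

noncomputable def nextRatioBound (α R : ℝ) : ℝ := (α + R) / (α + R⁻¹)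

section nextRatioBound

variable {α R : ℝ}

lemma one_le_nextRatioBound (hα : 0 < α) (hR : 1 ≤ R) : 1 ≤ nextRatioBound α R := by
  rw [nextRatioBound, one_le_div (by positivity)]
  linarith [inv_le_one_of_one_le₀ hR]

lemma nextRatioBound_sub_one_le (hα : 1 ≤ α) (hR : 1 ≤ R) :
    nextRatioBound α R - 1 ≤ 2 / (α + 1) * (R - 1) := by
  have hR0 : 0 < R := by linarith
  have hs : R⁻¹ ≤ 1 := inv_le_one_of_one_le₀ hR
  have hpos : 0 < α + R⁻¹ := by positivity
  rw [nextRatioBound, div_sub_one hpos.ne', div_mul_eq_mul_div,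
    div_le_div_iff₀ hpos (by linarith)]
  -- `R - R⁻¹ = (R - 1) (1 + R⁻¹)` and `(1 + s) (α + 1) ≤ 2 (α + s)` for `s ≤ 1 ≤ α`
  nlinarith [inv_mul_cancel₀ hR0.ne', mul_nonneg (sub_nonneg.2 hs) (sub_nonneg.2 hα),
    mul_nonneg (sub_nonneg.2 hR) (sub_nonneg.2 hs)]

end nextRatioBound

-- `v n ≤ α + u (n - 1) ≤ 2 α + v (n - 2) < 3 v (n - 2)`
lemma ratioEventuallyIn_Iic_three {α : ℝ} {u v : ℤ → ℝ} (hα : 0 < α)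
    (hu : ∀ᶠ n in atTop, u (n + 1) ≤ α + v n) (hv : ∀ᶠ n in atTop, v (n + 1) ≤ α + u n)
    (hvα : ∀ᶠ n in atTop, α < v n) : RatioEventuallyIn v (Iic 3) := by
  filter_upwards [(eventually_atTop_sub_int 1).2 hv, (eventually_atTop_sub_int 2).2 hu,
    (eventually_atTop_sub_int 2).2 hvα] with n hvn hun hvn2
  rw [sub_add_cancel] at hvn
  rw [show n - 2 + 1 = n - 1 by ring] at hun
  rw [mem_Iic, div_le_iff₀ (by linarith)]
  linarith

namespace IsRatioDriven

variable {α e : ℝ} {u v : ℤ → ℝ}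

lemma of_rec (hv : ∀ n : ℤ, -2 ≤ n → 0 < v n)
    (hu : ∀ n : ℤ, 0 ≤ n → u (n + 1) = α + v n ^ e / v (n - 2) ^ e) : IsRatioDriven α e v u := by
  filter_upwards [eventually_ge_atTop 0] with n hn
  have h0 := hv n (by omega)
  have h2 := hv (n - 2) (by omega)
  exact ⟨div_pos h0 h2, by rw [hu n hn, Real.div_rpow h0.le h2.le]⟩

lemma eventually_lt (hD : IsRatioDriven α e v u) : ∀ᶠ n in atTop, α < u n := by
  rw [← eventually_atTop_add_int 1]
  filter_upwards [hD] with n ⟨hpos, hrec⟩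
  rw [hrec]
  linarith [Real.rpow_pos_of_pos hpos e]

lemma eventually_sub_mem (hD : IsRatioDriven α e v u) (he0 : 0 ≤ e) (he1 : e ≤ 1)
    {I : Set ℝ} [I.OrdConnected] (h1 : 1 ∈ I) (hv : RatioEventuallyIn v I) :
    ∀ᶠ n in atTop, u n - α ∈ I := by
  rw [← eventually_atTop_add_int 1]
  filter_upwards [hD, hv] with n ⟨hpos, hrec⟩ hn
  rw [hrec, add_sub_cancel_left]
  exact rpow_mem_of_ordConnected h1 hpos hn he0 he1

lemma eventually_le_add (hD : IsRatioDriven α e v u) (hα : 1 ≤ α) (he0 : 0 ≤ e) (he1 : e ≤ 1)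
    (hv : ∀ᶠ n in atTop, α < v n) : ∀ᶠ n in atTop, u (n + 1) ≤ α + v n := by
  filter_upwards [hD, hv, (eventually_atTop_sub_int 2).2 hv] with n ⟨hpos, hrec⟩ hn hn2
  rw [hrec, add_le_add_iff_left]
  have hratio : v n / v (n - 2) ≤ v n := div_le_self (by linarith) (by linarith)
  exact rpow_mem_of_ordConnected (I := Iic (v n)) (mem_Iic.2 (by linarith)) hpos hratio he0 he1

lemma eventually_mem_Icc {p q : ℝ} (hD : IsRatioDriven α p v u) (hD' : IsRatioDriven α q u v)
    (hα : 1 < α) (hp0 : 0 ≤ p) (hp1 : p ≤ 1) (hq0 : 0 ≤ q) (hq1 : q ≤ 1) :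
    ∀ᶠ n in atTop, u n ∈ Icc α (α + 3) := by
  have hu := hD.eventually_lt
  have hv := hD'.eventually_lt
  have hratio := ratioEventuallyIn_Iic_three (by linarith)
    (hD.eventually_le_add hα.le hp0 hp1 hv) (hD'.eventually_le_add hα.le hq0 hq1 hu) hv
  filter_upwards [hu, hD.eventually_sub_mem hp0 hp1 (I := Iic 3) (by norm_num) hratio]
    with n hlo hhi
  exact ⟨hlo.le, by linarith [mem_Iic.1 hhi]⟩

lemma ratioEventuallyIn_nextRatioBound (hD : IsRatioDriven α e v u) (hα : 0 < α)
    (he0 : 0 ≤ e) (he1 : e ≤ 1) {R : ℝ} (hR : 1 ≤ R) (hv : RatioEventuallyIn v (Icc R⁻¹ R)) :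
    RatioEventuallyIn u (Icc (nextRatioBound α R)⁻¹ (nextRatioBound α R)) := by
  refine ratioEventuallyIn_of_eventually_mem_Icc (by positivity) ?_
  filter_upwards [hD.eventually_sub_mem he0 he1 (I := Icc R⁻¹ R) ⟨inv_le_one_of_one_le₀ hR, hR⟩ hv]
    with n ⟨hlo, hhi⟩
  constructor <;> linarith

lemma tendsto (hD : IsRatioDriven α e v u) (he0 : 0 ≤ e) (he1 : e ≤ 1) {Rs : ℕ → ℝ}
    (hRs : Tendsto Rs atTop (𝓝 1)) (hRs1 : ∀ k, 1 ≤ Rs k)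
    (hv : ∀ k, RatioEventuallyIn v (Icc (Rs k)⁻¹ (Rs k))) : Tendsto u atTop (𝓝 (α + 1)) := by
  rw [Metric.tendsto_nhds]
  intro ε hε
  obtain ⟨k, hk⟩ := (hRs.eventually (gt_mem_nhds (by linarith : 1 < 1 + ε))).exists
  have hR0 : 0 < Rs k := by linarith [hRs1 k]
  have hinv : 2 - Rs k ≤ (Rs k)⁻¹ := by
    nlinarith [mul_inv_cancel₀ hR0.ne', sq_nonneg (Rs k - 1)]
  filter_upwards [hD.eventually_sub_mem he0 he1 (I := Icc (Rs k)⁻¹ (Rs k))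
    ⟨inv_le_one_of_one_le₀ (hRs1 k), hRs1 k⟩ (hv k)]
    with n ⟨hlo, hhi⟩
  rw [Real.dist_eq, abs_sub_lt_iff]
  constructor <;> linarith

end IsRatioDriven

theorem global_attractor (α p q : ℝ) (hα : 1 < α) (hp : 0 < p) (hp1 : p ≤ 1)
    (hq : 0 < q) (hq1 : q ≤ 1)
    (x y : ℤ → ℝ)
    (hx0 : ∀ n : ℤ, -2 ≤ n → 0 < x n) (hy0 : ∀ n : ℤ, -2 ≤ n → 0 < y n)
    (hx : ∀ n : ℤ, 0 ≤ n → x (n + 1) = α + y n ^ p / y (n - 2) ^ p)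
    (hy : ∀ n : ℤ, 0 ≤ n → y (n + 1) = α + x n ^ q / x (n - 2) ^ q) :
    Tendsto x atTop (nhds (α + 1)) ∧ Tendsto y atTop (nhds (α + 1)) := by
  have hα0 : 0 < α := by linarith
  have hX : IsRatioDriven α p y x := .of_rec hy0 hx
  have hY : IsRatioDriven α q x y := .of_rec hx0 hy
  have hc0 : 0 ≤ 2 / (α + 1) := by positivity
  have hf1 := fun R => one_le_nextRatioBound (R := R) hα0
  have hfc := fun R => nextRatioBound_sub_one_le (R := R) hα.le
  have hR₀ : 1 ≤ (α + 3) / α := by rw [one_le_div hα0]; linarith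
  set Rs := fun k : ℕ => (nextRatioBound α)^[k] ((α + 3) / α)
  have hRs1 (k : ℕ) : 1 ≤ Rs k := (iterate_mem_Icc_of_sub_one_le hc0 hf1 hfc hR₀ k).1
  have hRs : Tendsto Rs atTop (𝓝 1) :=
    tendsto_iterate_of_sub_one_le hc0 ((div_lt_one (by linarith)).2 (by linarith)) hf1 hfc hR₀
  have hband (k : ℕ) : RatioEventuallyIn x (Icc (Rs k)⁻¹ (Rs k)) ∧
      RatioEventuallyIn y (Icc (Rs k)⁻¹ (Rs k)) := by
    induction k with
    | zero =>
      exact ⟨ratioEventuallyIn_of_eventually_mem_Icc hα0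
          (hX.eventually_mem_Icc hY hα hp.le hp1 hq.le hq1),
        ratioEventuallyIn_of_eventually_mem_Icc hα0
          (hY.eventually_mem_Icc hX hα hq.le hq1 hp.le hp1)⟩
    | succ k ih =>
      simp only [Rs, Function.iterate_succ_apply']
      exact ⟨hX.ratioEventuallyIn_nextRatioBound hα0 hp.le hp1 (hRs1 k) ih.2,
        hY.ratioEventuallyIn_nextRatioBound hα0 hq.le hq1 (hRs1 k) ih.1⟩
  exact ⟨hX.tendsto hp.le hp1 hRs hRs1 (fun k => (hband k).2),
    hY.tendsto hq.le hq1 hRs hRs1 (fun k => (hband k).1)⟩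
end

section
/- Assume α > 1 and 0 < p, q ≤ 1. Let A be the 6×6 matrix with entries A₁₄ = p/(α+1), A₁₆ = -p/(α+1), A₂₁ = A₃₂ = A₅₄ = A₆₅ = 1, A₄₁ = q/(α+1), A₄₃ = -q/(α+1), and all other entries zero (the Jacobian of the system at the equilibrium (α+1, α+1)). Then every eigenvalue λ of A satisfies |λ| < 1. -/
/-!
On an eigenvector `v` the shift rows give `v₀ = λ²v₂` and `v₃ = λ²v₅`, and the two remaining rows
become `λ³v₂ = a(λ² - 1)v₅`, `λ³v₅ = b(λ² - 1)v₂` with `a = p/(α+1)`, `b = q/(α+1)`. Hence every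
eigenvalue solves `λ⁶ = ab(λ² - 1)²`. Here `|ab| < 1/4`, while for `|λ| ≥ 1` we have
`|λ² - 1| ≤ |λ|² + 1 ≤ 2|λ|³`, so such a `λ` would give `|λ|⁶ < |λ|⁶`.
-/

open Matrix

theorem Matrix.exists_mulVec_eq_smul_of_mem_spectrum {K n : Type*} [Field K] [Fintype n]
    [DecidableEq n] {M : Matrix n n K} {μ : K} (hμ : μ ∈ spectrum K M) :
    ∃ v ≠ 0, M *ᵥ v = μ • v := by
  rw [← spectrum_toLin', ← Module.End.hasEigenvalue_iff_mem_spectrum] at hμ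
  obtain ⟨v, hv, hv0⟩ := hμ.exists_hasEigenvector
  exact ⟨v, hv0, Module.End.mem_eigenspace_iff.mp hv⟩

section DelayJacobian

variable {K : Type*} [Field K]

def delayJacobian (a b : K) : Matrix (Fin 6) (Fin 6) K :=
  !![0, 0, 0, a, 0, -a;
     1, 0, 0, 0, 0, 0;
     0, 1, 0, 0, 0, 0;
     b, 0, -b, 0, 0, 0;
     0, 0, 0, 1, 0, 0;
     0, 0, 0, 0, 1, 0]

theorem delayJacobian_mulVec (a b : K) (v : Fin 6 → K) :
    delayJacobian a b *ᵥ v = ![a * (v 3 - v 5), v 0, v 1, b * (v 0 - v 2), v 3, v 4] := by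
  ext i
  fin_cases i <;> simp [delayJacobian, mulVec, dotProduct, Fin.sum_univ_six] <;> ring

theorem delayJacobian_eigenvalue_eq {a b μ : K} {v : Fin 6 → K} (hv : v ≠ 0)
    (h : delayJacobian a b *ᵥ v = μ • v) : μ ^ 6 = a * b * (μ ^ 2 - 1) ^ 2 := by
  rw [delayJacobian_mulVec] at h
  have h0 : a * (v 3 - v 5) = μ * v 0 := by simpa using congrFun h 0
  have h1 : v 0 = μ * v 1 := by simpa using congrFun h 1
  have h2 : v 1 = μ * v 2 := by simpa using congrFun h 2
  have h3 : b * (v 0 - v 2) = μ * v 3 := by simpa using congrFun h 3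
  have h4 : v 3 = μ * v 4 := by simpa using congrFun h 4
  have h5 : v 4 = μ * v 5 := by simpa using congrFun h 5
  have k2 : μ ^ 3 * v 2 = a * (μ ^ 2 - 1) * v 5 := by
    rw [h1, h2, h4, h5] at h0
    linear_combination -h0
  have k5 : μ ^ 3 * v 5 = b * (μ ^ 2 - 1) * v 2 := by
    rw [h1, h2, h4, h5] at h3
    linear_combination -h3
  have hv25 : v 2 ≠ 0 ∨ v 5 ≠ 0 := by
    by_contra! h25
    refine hv (funext fun i => ?_)
    fin_cases i <;> simp [h1, h2, h4, h5, h25]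
  rcases hv25 with hv2 | hv5
  · exact mul_right_cancel₀ hv2 (by linear_combination μ ^ 3 * k2 + a * (μ ^ 2 - 1) * k5)
  · exact mul_right_cancel₀ hv5 (by linear_combination μ ^ 3 * k5 + b * (μ ^ 2 - 1) * k2)

end DelayJacobian

theorem norm_lt_one_of_pow_six_eq {𝕜 : Type*} [NormedField 𝕜] {c z : 𝕜} (hc : ‖c‖ < 1 / 4)
    (h : z ^ 6 = c * (z ^ 2 - 1) ^ 2) : ‖z‖ < 1 := by
  by_contra! hz
  have hsub : ‖z ^ 2 - 1‖ ≤ 2 * ‖z‖ ^ 3 := calc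
    ‖z ^ 2 - 1‖ ≤ ‖z‖ ^ 2 + 1 := (norm_sub_le _ _).trans_eq (by rw [norm_pow, norm_one])
    _ ≤ 2 * ‖z‖ ^ 3 := by
      nlinarith [one_le_pow₀ (n := 2) hz, pow_le_pow_right₀ hz (by norm_num : 2 ≤ 3)]
  have := calc
    ‖z‖ ^ 6 = ‖c‖ * ‖z ^ 2 - 1‖ ^ 2 := by rw [← norm_pow, h, norm_mul, norm_pow]
    _ ≤ ‖c‖ * (2 * ‖z‖ ^ 3) ^ 2 := by gcongr
    _ < 1 / 4 * (2 * ‖z‖ ^ 3) ^ 2 := by gcongr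
    _ = ‖z‖ ^ 6 := by ring
  exact lt_irrefl _ this

theorem abs_div_one_add_lt_half {α p : ℝ} (hα : 1 < α) (hp : 0 < p) (hp1 : p ≤ 1) :
    |p / (α + 1)| < 1 / 2 := by
  rw [abs_of_pos (by positivity), div_lt_iff₀ (by linarith)]
  linarith

theorem jacobian_eigenvalues_in_unit_disk (α p q : ℝ) (hα : 1 < α) (hp : 0 < p)
    (hp1 : p ≤ 1) (hq : 0 < q) (hq1 : q ≤ 1)
    (A : Matrix (Fin 6) (Fin 6) ℝ)
    (hA : A = Matrix.of
      ![![0, 0, 0, p / (α + 1), 0, -(p / (α + 1))],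
        ![1, 0, 0, 0, 0, 0],
        ![0, 1, 0, 0, 0, 0],
        ![q / (α + 1), 0, -(q / (α + 1)), 0, 0, 0],
        ![0, 0, 0, 1, 0, 0],
        ![0, 0, 0, 0, 1, 0]]) :
    ∀ lam : ℂ, lam ∈ spectrum ℂ (A.map (Complex.ofReal)) → ‖lam‖ < 1 := by
  intro lam hlam
  have hJ : A.map Complex.ofReal =
      delayJacobian ((p / (α + 1) : ℝ) : ℂ) ((q / (α + 1) : ℝ) : ℂ) := by
    subst hA
    ext i j
    fin_cases i <;> fin_cases j <;> simp [delayJacobian]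
  rw [hJ] at hlam
  obtain ⟨v, hv, hvlam⟩ := exists_mulVec_eq_smul_of_mem_spectrum hlam
  refine norm_lt_one_of_pow_six_eq ?_ (delayJacobian_eigenvalue_eq hv hvlam)
  rw [← Complex.ofReal_mul, Complex.norm_real, Real.norm_eq_abs, abs_mul]
  calc |p / (α + 1)| * |q / (α + 1)| < 1 / 2 * (1 / 2) :=
        mul_lt_mul'' (abs_div_one_add_lt_half hα hp hp1) (abs_div_one_add_lt_half hα hq hq1)
          (abs_nonneg _) (abs_nonneg _)
    _ = 1 / 4 := by norm_num
end

section
/- Assume α > 1 and 0 < p, q ≤ 1. If a positive solution (x_n, y_n) of the system satisfies x_{n₀} ≥ α+1, x_{n₀-1} ≥ α+1, y_{n₀} ≥ α+1, y_{n₀-1} ≥ α+1 for some n₀, and x_{n₀+1} < α+1, y_{n₀+1} < α+1, then x_{n₀+2} < α+1 and x_{n₀+3} < α+1, and similarly y_{n₀+2} < α+1 and y_{n₀+3} < α+1; i.e., the negative semi-cycle beginning at n₀+1 has at least three terms. -/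
lemma semicycle_key (α p : ℝ) (hp : 0 < p) {a b : ℝ} (ha : 0 < a) (hab : a < b) :
    α + a ^ p / b ^ p < α + 1 := by
  have hb : 0 < b := ha.trans hab
  have h1 : a ^ p < b ^ p := Real.rpow_lt_rpow ha.le hab hp
  have h2 : (0:ℝ) < b ^ p := Real.rpow_pos_of_pos hb p
  have : a ^ p / b ^ p < 1 := (div_lt_one h2).mpr h1
  linarith

theorem negative_semicycle_three_terms (α p q : ℝ) (hα : 1 < α) (hp : 0 < p)
    (hp1 : p ≤ 1) (hq : 0 < q) (hq1 : q ≤ 1)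
    (x y : ℤ → ℝ)
    (hx0 : ∀ n : ℤ, -2 ≤ n → 0 < x n) (hy0 : ∀ n : ℤ, -2 ≤ n → 0 < y n)
    (hx : ∀ n : ℤ, 0 ≤ n → x (n + 1) = α + y n ^ p / y (n - 2) ^ p)
    (hy : ∀ n : ℤ, 0 ≤ n → y (n + 1) = α + x n ^ q / x (n - 2) ^ q)
    (n₀ : ℤ) (hn₀ : 0 ≤ n₀)
    (h1 : α + 1 ≤ x n₀) (h2 : α + 1 ≤ x (n₀ - 1))
    (h3 : α + 1 ≤ y n₀) (h4 : α + 1 ≤ y (n₀ - 1))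
    (h5 : x (n₀ + 1) < α + 1) (h6 : y (n₀ + 1) < α + 1) :
    (x (n₀ + 2) < α + 1 ∧ x (n₀ + 3) < α + 1) ∧
      (y (n₀ + 2) < α + 1 ∧ y (n₀ + 3) < α + 1) := by
  have hy1pos : 0 < y (n₀ + 1) := hy0 _ (by linarith)
  have hx1pos : 0 < x (n₀ + 1) := hx0 _ (by linarith)
  -- x (n₀+2)
  have ex2 : x (n₀ + 2) = α + y (n₀ + 1) ^ p / y (n₀ - 1) ^ p := by
    have h := hx (n₀ + 1) (by linarith)
    rw [show n₀ + 1 + 1 = n₀ + 2 by ring, show n₀ + 1 - 2 = n₀ - 1 by ring] at h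
    exact h
  have ey2 : y (n₀ + 2) = α + x (n₀ + 1) ^ q / x (n₀ - 1) ^ q := by
    have h := hy (n₀ + 1) (by linarith)
    rw [show n₀ + 1 + 1 = n₀ + 2 by ring, show n₀ + 1 - 2 = n₀ - 1 by ring] at h
    exact h
  have hx2 : x (n₀ + 2) < α + 1 := by
    rw [ex2]; exact semicycle_key α p hp hy1pos (lt_of_lt_of_le h6 h4)
  have hy2 : y (n₀ + 2) < α + 1 := by
    rw [ey2]; exact semicycle_key α q hq hx1pos (lt_of_lt_of_le h5 h2)
  have hy2pos : 0 < y (n₀ + 2) := hy0 _ (by linarith)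
  have hx2pos : 0 < x (n₀ + 2) := hx0 _ (by linarith)
  have ex3 : x (n₀ + 3) = α + y (n₀ + 2) ^ p / y n₀ ^ p := by
    have h := hx (n₀ + 2) (by linarith)
    rw [show n₀ + 2 + 1 = n₀ + 3 by ring, show n₀ + 2 - 2 = n₀ by ring] at h
    exact h
  have ey3 : y (n₀ + 3) = α + x (n₀ + 2) ^ q / x n₀ ^ q := by
    have h := hy (n₀ + 2) (by linarith)
    rw [show n₀ + 2 + 1 = n₀ + 3 by ring, show n₀ + 2 - 2 = n₀ by ring] at h
    exact h
  have hx3 : x (n₀ + 3) < α + 1 := by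
    rw [ex3]; exact semicycle_key α p hp hy2pos (lt_of_lt_of_le hy2 h3)
  have hy3 : y (n₀ + 3) < α + 1 := by
    rw [ey3]; exact semicycle_key α q hq hx2pos (lt_of_lt_of_le hx2 h1)
  exact ⟨⟨hx2, hx3⟩, ⟨hy2, hy3⟩⟩
end

section
/- Assume α > 1 and 0 < p, q ≤ 1. Then every positive solution of the system satisfies lim sup_{n→∞} x_n ≤ α^{1-p}/(1 - α^{-(p+q)}) + α/(1 - α^{-(p+q)}) and lim sup_{n→∞} y_n ≤ α^{1-q}/(1 - α^{-(p+q)}) + α/(1 - α^{-(p+q)}); in particular both lim sups are finite and both lim infs are at least α. -/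
open Filter

/-- Auxiliary lemma: a two-step contracting recursion inequality gives
boundedness and a limsup bound. -/
lemma aux_contract (A c : ℝ) (hA : 0 ≤ A) (hc0 : 0 < c) (hc1 : c < 1)
    (u : ℤ → ℝ) (N : ℤ) (b : ℝ) (hb : 0 < b)
    (hlb : ∀ n : ℤ, N ≤ n → b ≤ u n)
    (hrec : ∀ n : ℤ, N ≤ n → u (n + 1) ≤ A + c * u (n - 1)) :
    IsBoundedUnder (· ≤ ·) atTop u ∧ limsup u atTop ≤ A / (1 - c) := by
  have h1c : 0 < 1 - c := by linarith
  set B : ℝ := max (max (u (N + 1)) (u (N + 2))) (A / (1 - c)) with hBdef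
  have hBge : A / (1 - c) ≤ B := le_max_right _ _
  have hbnd : ∀ k : ℕ, u (N + 1 + k) ≤ B := by
    intro k
    induction k using Nat.strong_induction_on with
    | _ k ih =>
      match k with
      | 0 =>
        have : N + 1 + ((0 : ℕ) : ℤ) = N + 1 := by push_cast; ring
        rw [this]
        exact le_max_of_le_left (le_max_left _ _)
      | 1 =>
        have : N + 1 + ((1 : ℕ) : ℤ) = N + 2 := by push_cast; ring
        rw [this]
        exact le_max_of_le_left (le_max_right _ _)
      | (k + 2) =>
        have h1 := hrec (N + 2 + k) (by omega)
        have h2 : u (N + 1 + k) ≤ B := ih k (by omega)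
        have e1 : N + 1 + ((k : ℤ) + 2) = (N + 2 + k) + 1 := by ring
        have e2 : (N + 2 + (k : ℤ)) - 1 = N + 1 + k := by ring
        rw [e2] at h1
        have : u (N + 1 + ((k : ℤ) + 2)) ≤ A + c * B := by
          rw [e1]
          refine h1.trans ?_
          have := mul_le_mul_of_nonneg_left h2 hc0.le
          linarith
        push_cast
        refine this.trans ?_
        have : A + c * B ≤ B := by
          have : A ≤ (1 - c) * B := by
            calc A = (1 - c) * (A / (1 - c)) := by field_simp
              _ ≤ (1 - c) * B := by
                exact mul_le_mul_of_nonneg_left hBge h1c.le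
          linarith
        linarith
  have hbnd' : ∀ n : ℤ, N + 1 ≤ n → u n ≤ B := by
    intro n hn
    have he : n = N + 1 + ((n - N - 1).toNat : ℤ) := by omega
    rw [he]; exact hbnd _
  have hbdd : IsBoundedUnder (· ≤ ·) atTop u :=
    ⟨B, eventually_atTop.2 ⟨N + 1, hbnd'⟩⟩
  refine ⟨hbdd, ?_⟩
  set B0 : ℝ := max 0 (B - A / (1 - c)) with hB0def
  have hB0 : 0 ≤ B0 := le_max_left _ _
  have hD : ∀ k : ℕ, ∀ n : ℤ, N + 1 + 2 * k ≤ n → u n ≤ A / (1 - c) + c ^ k * B0 := by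
    intro k
    induction k with
    | zero =>
      intro n hn
      have := hbnd' n (by omega)
      have : u n ≤ A / (1 - c) + (B - A / (1 - c)) := by linarith
      have h2 : B - A / (1 - c) ≤ B0 := le_max_right _ _
      simpa using this.trans (by linarith)
    | succ k ih =>
      intro n hn
      have hn' : N + 1 + 2 * (k : ℤ) ≤ n - 2 := by push_cast at hn ⊢; omega
      have h1 := hrec (n - 1) (by push_cast at hn; omega)
      have e1 : (n - 1) + 1 = n := by ring
      have e2 : (n - 1) - 1 = n - 2 := by ring
      rw [e1, e2] at h1
      have h2 := ih (n - 2) hn'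
      have h3 : c * u (n - 2) ≤ c * (A / (1 - c) + c ^ k * B0) :=
        mul_le_mul_of_nonneg_left h2 hc0.le
      have key : A + c * (A / (1 - c) + c ^ k * B0) = A / (1 - c) + c ^ (k + 1) * B0 := by
        field_simp
        ring
      calc u n ≤ A + c * u (n - 2) := h1
        _ ≤ A + c * (A / (1 - c) + c ^ k * B0) := by linarith
        _ = A / (1 - c) + c ^ (k + 1) * B0 := key
  have hcob : IsCoboundedUnder (· ≤ ·) atTop u :=
    isCoboundedUnder_le_of_eventually_le atTop
      (eventually_atTop.2 ⟨N, fun n hn => hlb n hn⟩)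
  refine le_of_forall_pos_le_add fun ε hε => ?_
  obtain ⟨k, hk⟩ : ∃ k : ℕ, c ^ k * B0 < ε := by
    have ht : Tendsto (fun k : ℕ => c ^ k * B0) atTop (nhds (0 * B0)) :=
      (tendsto_pow_atTop_nhds_zero_of_lt_one hc0.le hc1).mul_const B0
    rw [zero_mul] at ht
    exact (ht.eventually_lt_const hε).exists
  refine limsup_le_of_le hcob ?_
  filter_upwards [eventually_ge_atTop (N + 1 + 2 * (k : ℤ))] with n hn
  exact (hD k n hn).trans (by linarith)

theorem limsup_bounds (α p q : ℝ) (hα : 1 < α) (hp : 0 < p) (hp1 : p ≤ 1)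
    (hq : 0 < q) (hq1 : q ≤ 1)
    (x y : ℤ → ℝ)
    (hx0 : ∀ n : ℤ, -2 ≤ n → 0 < x n) (hy0 : ∀ n : ℤ, -2 ≤ n → 0 < y n)
    (hx : ∀ n : ℤ, 0 ≤ n → x (n + 1) = α + y n ^ p / y (n - 2) ^ p)
    (hy : ∀ n : ℤ, 0 ≤ n → y (n + 1) = α + x n ^ q / x (n - 2) ^ q) :
    IsBoundedUnder (· ≤ ·) atTop x ∧ IsBoundedUnder (· ≤ ·) atTop y ∧
      limsup x atTop ≤ α ^ (1 - p) / (1 - α ^ (-(p + q))) + α / (1 - α ^ (-(p + q))) ∧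
      limsup y atTop ≤ α ^ (1 - q) / (1 - α ^ (-(p + q))) + α / (1 - α ^ (-(p + q))) ∧
      α ≤ liminf x atTop ∧ α ≤ liminf y atTop := by
  have hα0 : (0 : ℝ) < α := lt_trans one_pos hα
  -- lower bounds
  have hxα : ∀ n : ℤ, 1 ≤ n → α ≤ x n := by
    intro n hn
    have h := hx (n - 1) (by omega)
    rw [show n - 1 + 1 = n by ring] at h
    have h1 : 0 < y (n - 1) ^ p := Real.rpow_pos_of_pos (hy0 _ (by omega)) p
    have h2 : 0 < y (n - 1 - 2) ^ p := Real.rpow_pos_of_pos (hy0 _ (by omega)) p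
    have := div_pos h1 h2
    linarith [h.le, h.ge]
  have hyα : ∀ n : ℤ, 1 ≤ n → α ≤ y n := by
    intro n hn
    have h := hy (n - 1) (by omega)
    rw [show n - 1 + 1 = n by ring] at h
    have h1 : 0 < x (n - 1) ^ q := Real.rpow_pos_of_pos (hx0 _ (by omega)) q
    have h2 : 0 < x (n - 1 - 2) ^ q := Real.rpow_pos_of_pos (hx0 _ (by omega)) q
    have := div_pos h1 h2
    linarith [h.le, h.ge]
  have hap : 0 < α ^ p := Real.rpow_pos_of_pos hα0 p
  have haq : 0 < α ^ q := Real.rpow_pos_of_pos hα0 q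
  have g1p : α ^ (1 - p) = α / α ^ p := by
    rw [Real.rpow_sub hα0, Real.rpow_one]
  have g1q : α ^ (1 - q) = α / α ^ q := by
    rw [Real.rpow_sub hα0, Real.rpow_one]
  have g2 : α ^ (-(p + q)) = 1 / (α ^ p * α ^ q) := by
    rw [Real.rpow_neg hα0.le, Real.rpow_add hα0, one_div]
  set c : ℝ := α ^ (-(p + q)) with hcdef
  have hc0 : 0 < c := Real.rpow_pos_of_pos hα0 _
  have hc1 : c < 1 := Real.rpow_lt_one_of_one_lt_of_neg hα (by linarith)
  -- key recursion inequalities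
  have keyx : ∀ n : ℤ, 4 ≤ n → x (n + 1) ≤ (α + α ^ (1 - p)) + c * x (n - 1) := by
    intro n hn
    have hyn : α ≤ y n := hyα n (by omega)
    have hyn2 : α ≤ y (n - 2) := hyα _ (by omega)
    have hxn1 : α ≤ x (n - 1) := hxα _ (by omega)
    have hxn3 : α ≤ x (n - 1 - 2) := hxα _ (by omega)
    have e1 : y n ^ p ≤ y n := by
      calc y n ^ p ≤ y n ^ (1 : ℝ) :=
            Real.rpow_le_rpow_of_exponent_le (by linarith) hp1
        _ = y n := Real.rpow_one _
    have e2 : α ^ p ≤ y (n - 2) ^ p := Real.rpow_le_rpow hα0.le hyn2 hp.le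
    have e3 : y n ^ p / y (n - 2) ^ p ≤ y n / α ^ p :=
      div_le_div₀ (by linarith) e1 hap e2
    have hyeq := hy (n - 1) (by omega)
    rw [show n - 1 + 1 = n by ring] at hyeq
    have f1 : x (n - 1) ^ q ≤ x (n - 1) := by
      calc x (n - 1) ^ q ≤ x (n - 1) ^ (1 : ℝ) :=
            Real.rpow_le_rpow_of_exponent_le (by linarith) hq1
        _ = x (n - 1) := Real.rpow_one _
    have f2 : α ^ q ≤ x (n - 1 - 2) ^ q := Real.rpow_le_rpow hα0.le hxn3 hq.le
    have f3 : x (n - 1) ^ q / x (n - 1 - 2) ^ q ≤ x (n - 1) / α ^ q :=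
      div_le_div₀ (by linarith) f1 haq f2
    have hy_ub : y n ≤ α + x (n - 1) / α ^ q := by rw [hyeq]; linarith
    have e4 : y n / α ^ p ≤ (α + x (n - 1) / α ^ q) / α ^ p :=
      (div_le_div_iff_of_pos_right hap).2 hy_ub
    have halg : α + (α + x (n - 1) / α ^ q) / α ^ p
        = (α + α ^ (1 - p)) + c * x (n - 1) := by
      rw [g1p, g2]
      field_simp
      ring
    calc x (n + 1) = α + y n ^ p / y (n - 2) ^ p := hx n (by omega)
      _ ≤ α + (α + x (n - 1) / α ^ q) / α ^ p := by linarith [e3.trans e4]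
      _ = (α + α ^ (1 - p)) + c * x (n - 1) := halg
  have keyy : ∀ n : ℤ, 4 ≤ n → y (n + 1) ≤ (α + α ^ (1 - q)) + c * y (n - 1) := by
    intro n hn
    have hxn : α ≤ x n := hxα n (by omega)
    have hxn2 : α ≤ x (n - 2) := hxα _ (by omega)
    have hyn1 : α ≤ y (n - 1) := hyα _ (by omega)
    have hyn3 : α ≤ y (n - 1 - 2) := hyα _ (by omega)
    have e1 : x n ^ q ≤ x n := by
      calc x n ^ q ≤ x n ^ (1 : ℝ) :=
            Real.rpow_le_rpow_of_exponent_le (by linarith) hq1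
        _ = x n := Real.rpow_one _
    have e2 : α ^ q ≤ x (n - 2) ^ q := Real.rpow_le_rpow hα0.le hxn2 hq.le
    have e3 : x n ^ q / x (n - 2) ^ q ≤ x n / α ^ q :=
      div_le_div₀ (by linarith) e1 haq e2
    have hxeq := hx (n - 1) (by omega)
    rw [show n - 1 + 1 = n by ring] at hxeq
    have f1 : y (n - 1) ^ p ≤ y (n - 1) := by
      calc y (n - 1) ^ p ≤ y (n - 1) ^ (1 : ℝ) :=
            Real.rpow_le_rpow_of_exponent_le (by linarith) hp1
        _ = y (n - 1) := Real.rpow_one _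
    have f2 : α ^ p ≤ y (n - 1 - 2) ^ p := Real.rpow_le_rpow hα0.le hyn3 hp.le
    have f3 : y (n - 1) ^ p / y (n - 1 - 2) ^ p ≤ y (n - 1) / α ^ p :=
      div_le_div₀ (by linarith) f1 hap f2
    have hx_ub : x n ≤ α + y (n - 1) / α ^ p := by rw [hxeq]; linarith
    have e4 : x n / α ^ q ≤ (α + y (n - 1) / α ^ p) / α ^ q :=
      (div_le_div_iff_of_pos_right haq).2 hx_ub
    have halg : α + (α + y (n - 1) / α ^ p) / α ^ q
        = (α + α ^ (1 - q)) + c * y (n - 1) := by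
      rw [g1q, g2]
      field_simp
      ring
    calc y (n + 1) = α + x n ^ q / x (n - 2) ^ q := hy n (by omega)
      _ ≤ α + (α + y (n - 1) / α ^ p) / α ^ q := by linarith [e3.trans e4]
      _ = (α + α ^ (1 - q)) + c * y (n - 1) := halg
  have hA_x : 0 ≤ α + α ^ (1 - p) := by
    have := Real.rpow_pos_of_pos hα0 (1 - p); linarith
  have hA_y : 0 ≤ α + α ^ (1 - q) := by
    have := Real.rpow_pos_of_pos hα0 (1 - q); linarith
  obtain ⟨hbx, hlx⟩ := aux_contract (α + α ^ (1 - p)) c hA_x hc0 hc1 x 4 α hα0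
    (fun n hn => hxα n (by omega)) keyx
  obtain ⟨hby, hly⟩ := aux_contract (α + α ^ (1 - q)) c hA_y hc0 hc1 y 4 α hα0
    (fun n hn => hyα n (by omega)) keyy
  refine ⟨hbx, hby, ?_, ?_, ?_, ?_⟩
  · refine hlx.trans (le_of_eq ?_)
    rw [add_div, add_comm]
  · refine hly.trans (le_of_eq ?_)
    rw [add_div, add_comm]
  · exact le_liminf_of_le hbx.isCoboundedUnder_ge
      (eventually_atTop.2 ⟨1, hxα⟩)
  · exact le_liminf_of_le hby.isCoboundedUnder_ge
      (eventually_atTop.2 ⟨1, hyα⟩)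
end
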